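/- Theorem 4 (second PAC-Bayesian domain adaptation bound): for any source domain S and target domain T over X×Y, any q > 1, and any probability measure ρ on H, R_T(G_ρ) ≤ (1/2)·d_{T_X}(ρ) + β_q · [e_S(ρ)]^{1−1/q} + η_{T∖S}. -/

import Mathlib

/-!
Pointwise `ℓ(h,y) + ℓ(h',y) = ℓ(h,h') + 2 ℓ(h,y) ℓ(h',y)`; averaging over `ρ ⊗ ρ` gives
`R_T(G_ρ) = ½ d_{T_X}(ρ) + e_T(ρ)`. The joint error is additive in the domain, so it splits along
`T = T_A + T_⊥`. On `T_⊥` the joint loss is at most the loss of one voter, hence at most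
`η_{T∖S}`. On `T_A = (dT_A/dS) • S`, Hölder with exponents `q` and `q/(q-1)` bounds each pair's
term by `β_q` times its source joint error to the power `1 - 1/q` (a `[0,1]`-valued function
dominates its powers above `1`), and Jensen for the concave `t ↦ t^{1-1/q}` moves the power
outside the average over `ρ ⊗ ρ`.
-/

open MeasureTheory Real

noncomputable section

/-- The 0-1 loss on labels in `{−1,+1}`, encoded by `Bool` (`false ↦ −1`, `true ↦ +1`). -/
def l01 (a b : Bool) : ℝ := if a = b then 0 else 1

variable {X H : Type*} [MeasurableSpace X] [MeasurableSpace H]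

/-- The expected error `R_P(h)` of a hypothesis `h` on a domain `P` over `X × Y`. -/
def risk (P : Measure (X × Bool)) (h : X → Bool) : ℝ := ∫ z, l01 (h z.1) z.2 ∂P

/-- The Gibbs risk `R_P(G_ρ) = E_{h~ρ} R_P(h)`. -/
def gibbsRisk (F : H → X → Bool) (P : Measure (X × Bool)) (ρ : Measure H) : ℝ :=
  ∫ h, risk P (F h) ∂ρ

/-- The expected disagreement `d_{D_X}(ρ) = E_{(h,h')~ρ⊗ρ} E_{x~D_X} ℓ(h(x),h'(x))`. -/
def expDisag (F : H → X → Bool) (D : Measure X) (ρ : Measure H) : ℝ :=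
  ∫ p, ∫ x, l01 (F p.1 x) (F p.2 x) ∂D ∂(ρ.prod ρ)

/-- The expected joint error `e_P(ρ) = E_{(h,h')~ρ⊗ρ} E_{(x,y)~P} ℓ(h(x),y)·ℓ(h'(x),y)`. -/
def jointErr (F : H → X → Bool) (P : Measure (X × Bool)) (ρ : Measure H) : ℝ :=
  ∫ p, ∫ z, l01 (F p.1 z.1) z.2 * l01 (F p.2 z.1) z.2 ∂P ∂(ρ.prod ρ)

/-- `β_q = (∫ (dT_A/dS)^q dS)^{1/q}`, where `T_A` is the absolutely continuous part of the
Lebesgue decomposition of `T` with respect to `S`, so that `dT_A/dS = T.rnDeriv S`. -/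
def betaQ (S T : Measure (X × Bool)) (q : ℝ) : ℝ :=
  (∫ z, (T.rnDeriv S z).toReal ^ q ∂S) ^ (1 / q)

/-- `η_{T∖S} = sup_{h∈H} ∫ ℓ(h(x),y) dT_⊥(x,y)`, where `T_⊥ = T.singularPart S`. -/
def etaTS (F : H → X → Bool) (S T : Measure (X × Bool)) : ℝ :=
  ⨆ h : H, ∫ z, l01 (F h z.1) z.2 ∂(T.singularPart S)

open scoped ENNReal

theorem l01_nonneg (a b : Bool) : 0 ≤ l01 a b := by
  unfold l01; split_ifs <;> norm_num

theorem l01_le_one (a b : Bool) : l01 a b ≤ 1 := by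
  unfold l01; split_ifs <;> norm_num

theorem norm_l01_le_one (a b : Bool) : ‖l01 a b‖ ≤ 1 := by
  rw [Real.norm_of_nonneg (l01_nonneg a b)]; exact l01_le_one a b

theorem l01_add_l01 (a b c : Bool) :
    l01 a c + l01 b c = l01 a b + 2 * (l01 a c * l01 b c) := by
  cases a <;> cases b <;> cases c <;> norm_num [l01]

theorem Measurable.l01 {α : Type*} [MeasurableSpace α] {u v : α → Bool} (hu : Measurable u)
    (hv : Measurable v) : Measurable fun x => l01 (u x) (v x) :=
  (measurable_of_countable (Function.uncurry _root_.l01)).comp (hu.prodMk hv)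

section Inequalities

variable {α : Type*} [MeasurableSpace α] {μ : Measure α}

theorem Integrable.rpow_const_of_le_one [IsFiniteMeasure μ] {f : α → ℝ} (hf : Integrable f μ)
    (hf0 : ∀ x, 0 ≤ f x) {c : ℝ} (hc0 : 0 ≤ c) (hc1 : c ≤ 1) :
    Integrable (fun x => f x ^ c) μ := by
  have h := integrable_norm_rpow_of_le hf.aestronglyMeasurable hc0 zero_le_one hc1
    (by simpa only [Real.rpow_one] using hf.norm)
  simpa only [Real.norm_of_nonneg (hf0 _)] using h

theorem integral_rpow_le_rpow_integral [IsProbabilityMeasure μ] {f : α → ℝ}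
    (hf : Integrable f μ) (hf0 : ∀ x, 0 ≤ f x) {c : ℝ} (hc0 : 0 ≤ c) (hc1 : c ≤ 1) :
    ∫ x, f x ^ c ∂μ ≤ (∫ x, f x ∂μ) ^ c :=
  (Real.concaveOn_rpow hc0 hc1).le_map_integral (Real.continuous_rpow_const hc0).continuousOn
    isClosed_Ici (ae_of_all _ hf0) hf (Integrable.rpow_const_of_le_one hf hf0 hc0 hc1)

theorem integral_mul_le_of_le_one [IsFiniteMeasure μ] {q : ℝ} (hq : 1 < q) {w φ : α → ℝ}
    (hw : AEStronglyMeasurable w μ) (hw0 : ∀ x, 0 ≤ w x) (hwq : Integrable (fun x => w x ^ q) μ)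
    (hφ : AEStronglyMeasurable φ μ) (hφ0 : ∀ x, 0 ≤ φ x) (hφ1 : ∀ x, φ x ≤ 1) :
    ∫ x, w x * φ x ∂μ ≤ (∫ x, w x ^ q ∂μ) ^ (1 / q) * (∫ x, φ x ∂μ) ^ (1 - 1 / q) := by
  have hpq : q.HolderConjugate q.conjExponent := .conjExponent hq
  have hwLp : MemLp w (ENNReal.ofReal q) μ := by
    rw [← integrable_norm_rpow_iff hw (by simpa using hpq.pos) ENNReal.ofReal_ne_top,
      ENNReal.toReal_ofReal hpq.nonneg]
    simpa only [Real.norm_of_nonneg (hw0 _)] using hwq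
  have hφ_bdd : ∀ᵐ x ∂μ, ‖φ x‖ ≤ 1 :=
    ae_of_all _ fun x => by rw [Real.norm_of_nonneg (hφ0 x)]; exact hφ1 x
  have hφLp : MemLp φ (ENNReal.ofReal q.conjExponent) μ :=
    (memLp_top_of_bound hφ 1 hφ_bdd).mono_exponent le_top
  have hφ_pow : ∫ x, φ x ^ q.conjExponent ∂μ ≤ ∫ x, φ x ∂μ :=
    integral_mono_of_nonneg (ae_of_all _ fun x => Real.rpow_nonneg (hφ0 x) _)
      (Integrable.of_bound hφ 1 hφ_bdd)
      (ae_of_all _ fun x => Real.rpow_le_self_of_le_one (hφ0 x) (hφ1 x) hpq.symm.lt.le)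
  calc ∫ x, w x * φ x ∂μ
      ≤ (∫ x, w x ^ q ∂μ) ^ (1 / q) * (∫ x, φ x ^ q.conjExponent ∂μ) ^ (1 / q.conjExponent) :=
        integral_mul_le_Lp_mul_Lq_of_nonneg hpq (ae_of_all _ hw0) (ae_of_all _ hφ0) hwLp hφLp
    _ ≤ (∫ x, w x ^ q ∂μ) ^ (1 / q) * (∫ x, φ x ∂μ) ^ (1 / q.conjExponent) := by
        have : 0 ≤ ∫ x, w x ^ q ∂μ := integral_nonneg fun x => Real.rpow_nonneg (hw0 x) q
        gcongr
        · exact integral_nonneg fun x => Real.rpow_nonneg (hφ0 x) _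
        · exact hpq.symm.one_div_nonneg
    _ = (∫ x, w x ^ q ∂μ) ^ (1 / q) * (∫ x, φ x ∂μ) ^ (1 - 1 / q) := by
        rw [one_div, one_div, hpq.one_sub_inv]

end Inequalities

section JointLoss

variable {α : Type*} (h h' : α → Bool) (z : α × Bool)

def jointLoss : ℝ :=
  l01 (h z.1) z.2 * l01 (h' z.1) z.2

theorem jointLoss_nonneg : 0 ≤ jointLoss h h' z :=
  mul_nonneg (l01_nonneg _ _) (l01_nonneg _ _)

theorem jointLoss_le_l01 : jointLoss h h' z ≤ l01 (h z.1) z.2 :=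
  mul_le_of_le_one_right (l01_nonneg _ _) (l01_le_one _ _)

theorem jointLoss_le_one : jointLoss h h' z ≤ 1 :=
  (jointLoss_le_l01 h h' z).trans (l01_le_one _ _)

theorem norm_jointLoss_le_one : ‖jointLoss h h' z‖ ≤ 1 := by
  rw [Real.norm_of_nonneg (jointLoss_nonneg h h' z)]; exact jointLoss_le_one h h' z

end JointLoss

section Risks

variable {F : H → X → Bool}

theorem jointErr_eq_integral_jointLoss (P : Measure (X × Bool)) (ρ : Measure H) :
    jointErr F P ρ = ∫ p : H × H, ∫ z, jointLoss (F p.1) (F p.2) z ∂P ∂(ρ.prod ρ) :=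
  rfl

theorem integrable_l01_fst_snd (P : Measure (X × Bool)) [IsFiniteMeasure P] {h : X → Bool}
    (hh : Measurable h) : Integrable (fun z : X × Bool => l01 (h z.1) z.2) P :=
  .of_bound ((hh.comp measurable_fst).l01 measurable_snd).aestronglyMeasurable 1
    (ae_of_all _ fun _ => norm_l01_le_one _ _)

theorem measurable_jointLoss {h h' : X → Bool} (hh : Measurable h) (hh' : Measurable h') :
    Measurable (jointLoss h h') :=
  ((hh.comp measurable_fst).l01 measurable_snd).mul ((hh'.comp measurable_fst).l01 measurable_snd)

theorem integrable_jointLoss (P : Measure (X × Bool)) [IsFiniteMeasure P] {h h' : X → Bool}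
    (hh : Measurable h) (hh' : Measurable h') : Integrable (jointLoss h h') P :=
  .of_bound (measurable_jointLoss hh hh').aestronglyMeasurable 1
    (ae_of_all _ (norm_jointLoss_le_one h h'))

theorem risk_add_risk (P : Measure (X × Bool)) [IsFiniteMeasure P] {h h' : X → Bool}
    (hh : Measurable h) (hh' : Measurable h') :
    risk P h + risk P h' =
      ∫ x, l01 (h x) (h' x) ∂(P.map Prod.fst) + 2 * ∫ z, jointLoss h h' z ∂P := by
  have hdis : Integrable (fun z : X × Bool => l01 (h z.1) (h' z.1)) P :=
    .of_bound ((hh.comp measurable_fst).l01 (hh'.comp measurable_fst)).aestronglyMeasurable 1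
      (ae_of_all _ fun _ => norm_l01_le_one _ _)
  rw [risk, risk, ← integral_add (integrable_l01_fst_snd P hh) (integrable_l01_fst_snd P hh'),
    integral_map measurable_fst.aemeasurable (hh.l01 hh').aestronglyMeasurable,
    ← integral_const_mul, ← integral_add hdis ((integrable_jointLoss P hh hh').const_mul 2)]
  exact integral_congr_ae (ae_of_all _ fun z => l01_add_l01 _ _ _)

theorem measurable_uncurry_jointLoss (hF : Measurable (Function.uncurry F)) :
    Measurable fun x : (H × H) × (X × Bool) => jointLoss (F x.1.1) (F x.1.2) x.2 :=
  ((hF.comp (measurable_fst.fst.prodMk measurable_snd.fst)).l01 measurable_snd.snd).mul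
    ((hF.comp (measurable_fst.snd.prodMk measurable_snd.fst)).l01 measurable_snd.snd)

theorem integrable_integral_jointLoss (hF : Measurable (Function.uncurry F))
    (P : Measure (X × Bool)) [IsFiniteMeasure P] (ν : Measure (H × H)) [IsFiniteMeasure ν] :
    Integrable (fun p : H × H => ∫ z, jointLoss (F p.1) (F p.2) z ∂P) ν :=
  (Integrable.of_bound (measurable_uncurry_jointLoss hF).aestronglyMeasurable 1
    (ae_of_all _ fun _ => norm_jointLoss_le_one _ _ _)).integral_prod_left

theorem gibbsRisk_eq_half_expDisag_add_jointErr (hF : Measurable (Function.uncurry F))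
    (P : Measure (X × Bool)) [IsFiniteMeasure P] (ρ : Measure H) [IsProbabilityMeasure ρ] :
    gibbsRisk F P ρ = 1 / 2 * expDisag F (P.map Prod.fst) ρ + jointErr F P ρ := by
  have hrisk : Integrable (fun h => risk P (F h)) ρ :=
    (Integrable.of_bound (((hF.comp (measurable_fst.prodMk measurable_snd.fst)).l01
      measurable_snd.snd).aestronglyMeasurable) 1
      (ae_of_all _ fun _ => norm_l01_le_one _ _)).integral_prod_left
  have hdis : Integrable (fun p : H × H => ∫ x, l01 (F p.1 x) (F p.2 x) ∂(P.map Prod.fst))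
      (ρ.prod ρ) :=
    (Integrable.of_bound (((hF.comp (measurable_fst.fst.prodMk measurable_snd)).l01
      (hF.comp (measurable_fst.snd.prodMk measurable_snd))).aestronglyMeasurable) 1
      (ae_of_all _ fun _ => norm_l01_le_one _ _)).integral_prod_left
  have h2 : 2 * gibbsRisk F P ρ = expDisag F (P.map Prod.fst) ρ + 2 * jointErr F P ρ :=
    calc 2 * gibbsRisk F P ρ
        = ∫ p : H × H, (risk P (F p.1) + risk P (F p.2)) ∂(ρ.prod ρ) := by
          rw [integral_add (hrisk.comp_fst ρ) (hrisk.comp_snd ρ),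
            integral_fun_fst (fun h => risk P (F h)), integral_fun_snd (fun h => risk P (F h)),
            gibbsRisk]
          simp only [probReal_univ, one_smul]
          ring
      _ = ∫ p : H × H, (∫ x, l01 (F p.1 x) (F p.2 x) ∂(P.map Prod.fst)
            + 2 * ∫ z, jointLoss (F p.1) (F p.2) z ∂P) ∂(ρ.prod ρ) :=
          integral_congr_ae (ae_of_all _ fun p =>
            risk_add_risk P hF.of_uncurry_left hF.of_uncurry_left)
      _ = expDisag F (P.map Prod.fst) ρ + 2 * jointErr F P ρ := by
          rw [integral_add hdis ((integrable_integral_jointLoss hF P _).const_mul 2),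
            integral_const_mul]
          rfl
  linarith

theorem jointErr_add_measure (hF : Measurable (Function.uncurry F))
    (μ ν : Measure (X × Bool)) [IsFiniteMeasure μ] [IsFiniteMeasure ν]
    (ρ : Measure H) [IsFiniteMeasure ρ] :
    jointErr F (μ + ν) ρ = jointErr F μ ρ + jointErr F ν ρ := by
  have hsplit : ∀ p : H × H, ∫ z, jointLoss (F p.1) (F p.2) z ∂(μ + ν)
      = ∫ z, jointLoss (F p.1) (F p.2) z ∂μ + ∫ z, jointLoss (F p.1) (F p.2) z ∂ν := fun p =>
    integral_add_measure (integrable_jointLoss μ hF.of_uncurry_left hF.of_uncurry_left)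
      (integrable_jointLoss ν hF.of_uncurry_left hF.of_uncurry_left)
  simp only [jointErr_eq_integral_jointLoss, hsplit]
  exact integral_add (integrable_integral_jointLoss hF μ _) (integrable_integral_jointLoss hF ν _)

theorem jointErr_le_iSup_risk (hF : Measurable (Function.uncurry F))
    (μ : Measure (X × Bool)) [IsFiniteMeasure μ] (ρ : Measure H) [IsProbabilityMeasure ρ] :
    jointErr F μ ρ ≤ ⨆ h, risk μ (F h) := by
  have hbdd : BddAbove (Set.range fun h => risk μ (F h)) := by
    refine ⟨μ.real Set.univ, ?_⟩
    rintro _ ⟨h, rfl⟩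
    have := norm_integral_le_of_norm_le_const (μ := μ)
      (ae_of_all _ fun z : X × Bool => norm_l01_le_one (F h z.1) z.2)
    rw [one_mul] at this
    exact (le_abs_self _).trans this
  calc jointErr F μ ρ ≤ ∫ _p : H × H, ⨆ h, risk μ (F h) ∂(ρ.prod ρ) :=
        integral_mono (integrable_integral_jointLoss hF μ _) (integrable_const _) fun p =>
          (integral_mono (integrable_jointLoss μ hF.of_uncurry_left hF.of_uncurry_left)
            (integrable_l01_fst_snd μ hF.of_uncurry_left) (jointLoss_le_l01 _ _)).trans
            (le_ciSup hbdd p.1)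
    _ = ⨆ h, risk μ (F h) := by simp

theorem jointErr_withDensity_le (hF : Measurable (Function.uncurry F))
    (S : Measure (X × Bool)) [IsFiniteMeasure S] (ρ : Measure H) [IsProbabilityMeasure ρ]
    {w : X × Bool → ℝ≥0∞} (hw : Measurable w) (hw_lt : ∀ᵐ z ∂S, w z < ∞) {q : ℝ} (hq : 1 < q)
    (hwq : Integrable (fun z => (w z).toReal ^ q) S) :
    jointErr F (S.withDensity w) ρ
      ≤ (∫ z, (w z).toReal ^ q ∂S) ^ (1 / q) * jointErr F S ρ ^ (1 - 1 / q) := by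
  set B := (∫ z, (w z).toReal ^ q ∂S) ^ (1 / q)
  have hB : 0 ≤ B :=
    Real.rpow_nonneg (integral_nonneg fun z => Real.rpow_nonneg ENNReal.toReal_nonneg q) _
  have hc0 : 0 ≤ 1 - 1 / q := sub_nonneg.2 ((div_le_one (by linarith)).2 hq.le)
  have hc1 : 1 - 1 / q ≤ 1 := sub_le_self _ (by positivity)
  have hJ := integrable_integral_jointLoss hF S (ρ.prod ρ)
  have hJ0 : ∀ p : H × H, 0 ≤ ∫ z, jointLoss (F p.1) (F p.2) z ∂S := fun p =>
    integral_nonneg (jointLoss_nonneg _ _)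
  calc jointErr F (S.withDensity w) ρ
      = ∫ p : H × H, ∫ z, (w z).toReal * jointLoss (F p.1) (F p.2) z ∂S ∂(ρ.prod ρ) := by
        simp only [jointErr_eq_integral_jointLoss,
          integral_withDensity_eq_integral_toReal_smul hw hw_lt, smul_eq_mul]
    _ ≤ ∫ p : H × H, B * (∫ z, jointLoss (F p.1) (F p.2) z ∂S) ^ (1 - 1 / q) ∂(ρ.prod ρ) :=
        integral_mono_of_nonneg (ae_of_all _ fun p => integral_nonneg fun z =>
            mul_nonneg ENNReal.toReal_nonneg (jointLoss_nonneg _ _ _))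
          ((Integrable.rpow_const_of_le_one hJ hJ0 hc0 hc1).const_mul B)
          (ae_of_all _ fun p => integral_mul_le_of_le_one hq
            hw.ennreal_toReal.aestronglyMeasurable (fun _ => ENNReal.toReal_nonneg) hwq
            (measurable_jointLoss hF.of_uncurry_left hF.of_uncurry_left).aestronglyMeasurable
            (jointLoss_nonneg _ _) (jointLoss_le_one _ _))
    _ = B * ∫ p : H × H, (∫ z, jointLoss (F p.1) (F p.2) z ∂S) ^ (1 - 1 / q) ∂(ρ.prod ρ) :=
        integral_const_mul _ _
    _ ≤ B * jointErr F S ρ ^ (1 - 1 / q) := by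
        gcongr
        exact integral_rpow_le_rpow_integral hJ hJ0 hc0 hc1

end Risks

/-- Theorem 4 (second PAC-Bayesian domain adaptation bound): for any source domain `S` and
target domain `T` over `X×Y`, any `q > 1` (with `β_q` finite), and any probability measure
`ρ` on `H`, `R_T(G_ρ) ≤ (1/2)·d_{T_X}(ρ) + β_q · [e_S(ρ)]^{1−1/q} + η_{T∖S}`. -/
theorem second_pac_bayes_da_bound
    (F : H → X → Bool) (hF : Measurable (Function.uncurry F))
    (S T : Measure (X × Bool)) [IsProbabilityMeasure S] [IsProbabilityMeasure T]
    (q : ℝ) (hq : 1 < q)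
    (hβ : Integrable (fun z => (T.rnDeriv S z).toReal ^ q) S)
    (ρ : Measure H) [IsProbabilityMeasure ρ] :
    gibbsRisk F T ρ ≤ (1 / 2) * expDisag F (T.map Prod.fst) ρ
      + betaQ S T q * (jointErr F S ρ) ^ (1 - 1 / q) + etaTS F S T := by
  have hT : S.withDensity (T.rnDeriv S) + T.singularPart S = T :=
    Measure.rnDeriv_add_singularPart T S
  calc gibbsRisk F T ρ
      = 1 / 2 * expDisag F (T.map Prod.fst) ρ + jointErr F T ρ :=
        gibbsRisk_eq_half_expDisag_add_jointErr hF T ρ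
    _ = 1 / 2 * expDisag F (T.map Prod.fst) ρ
          + (jointErr F (S.withDensity (T.rnDeriv S)) ρ + jointErr F (T.singularPart S) ρ) := by
        rw [← jointErr_add_measure hF, hT]
    _ ≤ 1 / 2 * expDisag F (T.map Prod.fst) ρ
          + (betaQ S T q * jointErr F S ρ ^ (1 - 1 / q) + etaTS F S T) := by
        gcongr
        · exact jointErr_withDensity_le hF S ρ (T.measurable_rnDeriv S) (T.rnDeriv_lt_top S) hq hβ
        · exact jointErr_le_iSup_risk hF (T.singularPart S) ρ
    _ = 1 / 2 * expDisag F (T.map Prod.fst) ρ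
          + betaQ S T q * jointErr F S ρ ^ (1 - 1 / q) + etaTS F S T := by
        ring

end
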